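/- Let (K, V) be a pair of real random variables such that (K, V) has the same joint distribution as (K, −V), such that K − |V| > 0 almost surely, and such that log(K + V) is integrable. Then E[log(K + V)] ≤ E[log K]. -/

import Mathlib

/-!
Since `(K, V)` and `(K, -V)` have the same law, `log (K + V)` and `log (K - V)` have the same
expectation. Averaging the two and using `(K + V)(K - V) = K² - V² ≤ K²` pointwise gives
`E[log (K + V)] = E[log (K + V) + log (K - V)] / 2 ≤ E[log K]`; the same two terms dominate
`|log K|`, which makes `log K` integrable.
-/

open MeasureTheory ProbabilityTheory

namespace Real

variable {k v : ℝ}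

lemma log_add_add_log_sub_le_two_mul_log (hv : |v| < k) :
    log (k + v) + log (k - v) ≤ 2 * log k := by
  obtain ⟨hneg, hpos⟩ := abs_lt.mp hv
  have hk : 0 < k := (abs_nonneg v).trans_lt hv
  calc log (k + v) + log (k - v)
      = log ((k + v) * (k - v)) := (log_mul (by linarith) (by linarith)).symm
    _ ≤ log (k * k) := log_le_log (by nlinarith) (by nlinarith [sq_nonneg v])
    _ = 2 * log k := by rw [log_mul hk.ne' hk.ne']; ring

lemma log_le_max_log_add_log_sub (hv : |v| < k) :
    log k ≤ max (log (k + v)) (log (k - v)) := by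
  have hk : 0 < k := (abs_nonneg v).trans_lt hv
  rcases le_total 0 v with hv0 | hv0
  · exact le_max_of_le_left (log_le_log hk (by linarith))
  · exact le_max_of_le_right (log_le_log hk (by linarith))

lemma abs_log_le_abs_log_add_add_abs_log_sub (hv : |v| < k) :
    |log k| ≤ |log (k + v)| + |log (k - v)| := by
  have lower := log_add_add_log_sub_le_two_mul_log hv
  have upper := log_le_max_log_add_log_sub hv
  rw [abs_le]
  constructor
  · linarith [neg_abs_le (log (k + v)), neg_abs_le (log (k - v)), abs_nonneg (log (k + v)),
      abs_nonneg (log (k - v))]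
  · refine upper.trans (max_le ?_ ?_)
    · linarith [le_abs_self (log (k + v)), abs_nonneg (log (k - v))]
    · linarith [le_abs_self (log (k - v)), abs_nonneg (log (k + v))]

end Real

theorem stmt_10_general {Ω : Type*} [MeasurableSpace Ω] (μ : Measure Ω)
    (K V : Ω → ℝ) (hK : Measurable K) (hV : Measurable V)
    (hsym : μ.map (fun ω => (K ω, V ω)) = μ.map (fun ω => (K ω, -V ω)))
    (hpos : ∀ᵐ ω ∂μ, 0 < K ω - |V ω|)
    (hint : Integrable (fun ω => Real.log (K ω + V ω)) μ) :
    ∫ ω, Real.log (K ω + V ω) ∂μ ≤ ∫ ω, Real.log (K ω) ∂μ := by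
  have hlt : ∀ᵐ ω ∂μ, |V ω| < K ω := hpos.mono fun ω h => sub_pos.mp h
  have hreflect : IdentDistrib (fun ω => Real.log (K ω + V ω)) (fun ω => Real.log (K ω - V ω))
      μ μ := by
    have hpair : IdentDistrib (fun ω => (K ω, V ω)) (fun ω => (K ω, -V ω)) μ μ :=
      ⟨(hK.prodMk hV).aemeasurable, (hK.prodMk hV.neg).aemeasurable, hsym⟩
    simpa only [Function.comp_def, ← sub_eq_add_neg] using
      hpair.comp (u := fun p : ℝ × ℝ => Real.log (p.1 + p.2)) (by fun_prop)
  have hint' := hreflect.integrable_iff.mp hint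
  have hintK : Integrable (fun ω => Real.log (K ω)) μ :=
    (hint.abs.add hint'.abs).mono' hK.log.aestronglyMeasurable <| hlt.mono fun ω h => by
      simpa only [Real.norm_eq_abs, Pi.add_apply] using Real.abs_log_le_abs_log_add_add_abs_log_sub h
  have hmono : ∫ ω, (Real.log (K ω + V ω) + Real.log (K ω - V ω)) ∂μ
      ≤ ∫ ω, 2 * Real.log (K ω) ∂μ :=
    integral_mono_ae (hint.add hint') (hintK.const_mul 2)
      (hlt.mono fun ω h => Real.log_add_add_log_sub_le_two_mul_log h)
  rw [integral_add hint hint', integral_const_mul, ← hreflect.integral_eq] at hmono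
  linarith

theorem stmt_10 {Ω : Type*} [MeasurableSpace Ω] (μ : Measure Ω) [IsProbabilityMeasure μ]
    (K V : Ω → ℝ) (hK : Measurable K) (hV : Measurable V)
    (hsym : μ.map (fun ω => (K ω, V ω)) = μ.map (fun ω => (K ω, -V ω)))
    (hpos : ∀ᵐ ω ∂μ, 0 < K ω - |V ω|)
    (hint : Integrable (fun ω => Real.log (K ω + V ω)) μ) :
    ∫ ω, Real.log (K ω + V ω) ∂μ ≤ ∫ ω, Real.log (K ω) ∂μ :=
  stmt_10_general μ K V hK hV hsym hpos hint
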